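/- Let $K$ be a field, $X$ the generic skew-symmetric $n \times n$ matrix, and $g_1, \ldots, g_n$ the entries of $XY$ with $Y$ the generic column. For every $1 \le t \le n-2$, the ideal $\langle g_1, \ldots, g_t \rangle$ is prime in $R$. -/

import Mathlib

/-!
Rows are indexed from `0`. Write `g_i^{(l)} = ∑_{k<l} x_{ik} y_k` for the entries of `X Y` with `Y`
cut down to its first `l` entries; we show by induction on `l` that `(g_i^{(l)})_{i<t}` is prime
for `t ≤ l - 2`. Let `I = (g_i^{(l+1)})_{i<t}` with `t ≤ l - 1`. Since
`g_i^{(l+1)} = g_i^{(l)} + x_{il} y_l`, after inverting `y_l` the ideal `I` is generated by the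
`x_{il} + g_i^{(l)} / y_l`; so once `y_l` is a nonzerodivisor modulo `I`, `I` is the kernel of the
substitution `x_{il} ↦ -g_i^{(l)} / y_l` into the localisation at `y_l`, a domain. By induction
the `g_i^{(l)}`, `i < t`, form a regular sequence (each lies outside the prime ideal generated by
the previous ones), so all their syzygies are Koszul; setting `y_l = 0` turns `y_l r ∈ I` into
such a syzygy, whose Koszul form shows `r ∈ I`.
-/

open MvPolynomial Finset

section InitialSpan

variable {R : Type*} [CommRing R]

def initialSpan (f : ℕ → R) (t : ℕ) : Ideal R := Ideal.span (f '' Set.Iio t)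

theorem mem_initialSpan_iff {f : ℕ → R} {t : ℕ} {x : R} :
    x ∈ initialSpan f t ↔ ∃ c : ℕ → R, ∑ i ∈ range t, c i * f i = x := by
  constructor
  · intro hx
    induction hx using Submodule.span_induction with
    | mem x hx =>
      obtain ⟨i, hi, rfl⟩ := hx
      exact ⟨Pi.single i 1, by simp [Pi.single_apply, Set.mem_Iio.mp hi]⟩
    | zero => exact ⟨0, by simp⟩
    | add x y _ _ hx hy =>
      obtain ⟨c, rfl⟩ := hx
      obtain ⟨d, rfl⟩ := hy
      exact ⟨c + d, by simp [add_mul, sum_add_distrib]⟩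
    | smul a x _ hx =>
      obtain ⟨c, rfl⟩ := hx
      exact ⟨a • c, by simp [mul_sum, mul_assoc]⟩
  · rintro ⟨c, rfl⟩
    exact Ideal.sum_mem _ fun i hi =>
      Ideal.mul_mem_left _ _ (Ideal.subset_span ⟨i, by simpa using hi, rfl⟩)

theorem apply_mem_initialSpan {f : ℕ → R} {t i : ℕ} (hi : i < t) : f i ∈ initialSpan f t :=
  Ideal.subset_span ⟨i, hi, rfl⟩

theorem initialSpan_zero (f : ℕ → R) : initialSpan f 0 = ⊥ := by
  simp [initialSpan]

def HasKoszulSyzygies (f : ℕ → R) (t : ℕ) : Prop :=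
  ∀ a : ℕ → R, ∑ i ∈ range t, a i * f i = 0 →
    ∃ c : ℕ → ℕ → R, (∀ i j, c i j = -c j i) ∧ (∀ i, c i i = 0) ∧
      ∀ i < t, a i = ∑ j ∈ range t, c i j * f j

theorem sum_sum_alternating_mul_eq_zero {ι : Type*} (s : Finset ι) {c : ι → ι → R}
    (hc : ∀ i j, c i j = -c j i) (hdiag : ∀ i, c i i = 0) (f : ι → R) :
    ∑ i ∈ s, (∑ j ∈ s, c i j * f j) * f i = 0 := by
  simp_rw [sum_mul, ← sum_product']
  refine sum_involution (fun p _ => p.swap) (fun p _ => by rw [hc p.1 p.2]; simp; ring)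
    (fun p _ hp hswap => hp ?_) (fun p hp => by simpa [and_comm] using hp) (fun _ _ => rfl)
  obtain ⟨i, j⟩ := p
  simp only [Prod.swap_prod_mk, Prod.mk.injEq] at hswap
  obtain ⟨rfl, -⟩ := hswap
  simp [hdiag]

theorem hasKoszulSyzygies_of_regular {f : ℕ → R} {t : ℕ}
    (hreg : ∀ j < t, ∀ a, a * f j ∈ initialSpan f j → a ∈ initialSpan f j) :
    HasKoszulSyzygies f t := by
  induction t with
  | zero => exact fun _ _ => ⟨0, by simp, by simp, by simp⟩
  | succ t ih =>
    intro a ha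
    rw [sum_range_succ] at ha
    have hat : a t * f t ∈ initialSpan f t := by
      rw [eq_neg_of_add_eq_zero_right ha]
      exact neg_mem (mem_initialSpan_iff.mpr ⟨a, rfl⟩)
    obtain ⟨w, hw⟩ := mem_initialSpan_iff.mp (hreg t t.lt_succ_self _ hat)
    have ha' : ∑ i ∈ range t, (a i + w i * f t) * f i = 0 := by
      simp_rw [add_mul, sum_add_distrib, mul_right_comm _ (f t), ← sum_mul, hw]
      exact ha
    obtain ⟨d, hd, hd0, had⟩ := ih (fun j hj => hreg j (by omega)) _ ha'
    set c : ℕ → ℕ → R := fun i j =>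
      if i = j then 0 else if i = t then w j else if j = t then -w i else d i j
    have hc_lt : ∀ i < t, ∀ j < t, c i j = d i j := by
      intro i hi j hj
      by_cases h : i = j <;> simp [c, h, hi.ne, hj.ne, hd0]
    refine ⟨c, fun i j => ?_, fun i => by simp [c], fun i hi => ?_⟩
    · by_cases hij : i = j
      · simp [c, hij]
      by_cases hi : i = t <;> by_cases hj : j = t
      · exact absurd (hi.trans hj.symm) hij
      · subst hi
        simp [c, hj, Ne.symm hj]
      · subst hj
        simp [c, hi, Ne.symm hi]
      · simp [c, hij, Ne.symm hij, hi, hj, hd i j]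
    rw [sum_range_succ]
    rcases Nat.lt_succ_iff_lt_or_eq.mp hi with hi | rfl
    · rw [sum_congr rfl fun j hj => by rw [hc_lt i hi j (mem_range.mp hj)], ← had i hi]
      simp [c, hi.ne]
    · rw [sum_congr rfl fun j hj => by rw [show c i j = w j by simp [c, (mem_range.mp hj).ne']], hw]
      simp [c]

/-- Applying `π` to `y r = ∑ c i * (f i + y h i)` gives a syzygy of the `f i`; its Koszul form
shows `c i ≡ ∑ e i j * f j` modulo `y`, and the alternating part cancels, leaving `y` times a
combination of the generators. -/
theorem mem_initialSpan_of_mul_mem {y : R} (hy : IsLeftRegular y) (π : R →+* R) (hπy : π y = 0)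
    (hπ : ∀ r, r - π r ∈ Ideal.span {y}) {f h : ℕ → R} {t : ℕ} (hπf : ∀ i < t, π (f i) = f i)
    (hf : HasKoszulSyzygies f t) {r : R}
    (hr : y * r ∈ initialSpan (fun i => f i + y * h i) t) :
    r ∈ initialSpan (fun i => f i + y * h i) t := by
  set f' := fun i => f i + y * h i
  obtain ⟨c, hc⟩ := mem_initialSpan_iff.mp hr
  have hπc : ∑ i ∈ range t, π (c i) * f i = 0 := by
    have := congrArg π hc
    rw [map_sum, map_mul, hπy, zero_mul] at this
    rw [← this]
    exact sum_congr rfl fun i hi => by simp [f', hπy, hπf i (mem_range.mp hi)]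
  obtain ⟨e, he, he0, hce⟩ := hf _ hπc
  choose b hb using fun i => Ideal.mem_span_singleton'.mp (hπ (c i))
  have hrow : ∀ i < t,
      y * (b i - ∑ j ∈ range t, e i j * h j) = c i - ∑ j ∈ range t, e i j * f' j := by
    intro i hi
    have hsum : ∑ j ∈ range t, e i j * f' j = π (c i) + y * ∑ j ∈ range t, e i j * h j := by
      simp only [f', mul_add, sum_add_distrib, ← hce i hi, mul_sum, mul_left_comm]
    rw [hsum]
    linear_combination hb i
  refine mem_initialSpan_iff.mpr ⟨fun i => b i - ∑ j ∈ range t, e i j * h j, hy ?_⟩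
  calc y * ∑ i ∈ range t, (b i - ∑ j ∈ range t, e i j * h j) * f' i
      = ∑ i ∈ range t, (c i - ∑ j ∈ range t, e i j * f' j) * f' i := by
        rw [mul_sum]
        exact sum_congr rfl fun i hi => by rw [← mul_assoc, hrow i (mem_range.mp hi)]
    _ = y * r := by
        rw [← hc, ← sub_zero (∑ i ∈ range t, c i * f' i),
          ← sum_sum_alternating_mul_eq_zero (range t) he he0 f', ← sum_sub_distrib]
        simp only [sub_mul]

/-- The hypotheses say that `φ` induces an embedding of `(R ⧸ I)[1/y]` into the domain `A` and
that `y` is a nonzerodivisor modulo `I`. -/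
theorem Ideal.isPrime_of_le_ker {A : Type*} [CommRing A] [IsDomain A] (I : Ideal R)
    (φ ψ : R →+* A) (hψ : Function.Injective ψ) (hI : I ≤ RingHom.ker φ) {y : R}
    (hcolon : ∀ r, y * r ∈ I → r ∈ I)
    (hred : ∀ f, ∃ (d : ℕ) (r : R), y ^ d * f - r ∈ I ∧ φ r = ψ r) : I.IsPrime := by
  suffices I = RingHom.ker φ from this ▸ RingHom.ker_isPrime φ
  refine le_antisymm hI fun f hf => ?_
  obtain ⟨d, r, hdr, hr⟩ := hred f
  have hφr := RingHom.mem_ker.mp (hI hdr)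
  rw [map_sub, map_mul, RingHom.mem_ker.mp hf, mul_zero, zero_sub, neg_eq_zero, hr] at hφr
  have hr0 : r = 0 := hψ (by rw [hφr, map_zero])
  rw [hr0, sub_zero] at hdr
  induction d with
  | zero => simpa using hdr
  | succ d ih => exact ih (hcolon _ (by rwa [← mul_assoc, ← pow_succ']))

end InitialSpan

namespace MvPolynomial

variable {σ R A : Type*} [CommRing R] [CommRing A]

theorem aeval_sub_aeval_mem [Algebra R A] {I : Ideal A} {v w : σ → A} (hvw : ∀ s, v s - w s ∈ I)
    (f : MvPolynomial σ R) : aeval v f - aeval w f ∈ I := by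
  rw [← Ideal.Quotient.eq, ← Ideal.Quotient.mkₐ_eq_mk R, ← AlgHom.comp_apply, ← AlgHom.comp_apply,
    comp_aeval, comp_aeval]
  congr 2
  funext s
  exact Ideal.Quotient.eq.mpr (hvw s)

theorem exists_pow_mul_sub_mem {I : Ideal (MvPolynomial σ R)} (φ ψ : MvPolynomial σ R →+* A)
    (hC : ∀ a, φ (C a) = ψ (C a)) {y : MvPolynomial σ R} (hy : φ y = ψ y)
    (hX : ∀ s, ∃ (d : ℕ) (r : MvPolynomial σ R), y ^ d * X s - r ∈ I ∧ φ r = ψ r)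
    (f : MvPolynomial σ R) :
    ∃ (d : ℕ) (r : MvPolynomial σ R), y ^ d * f - r ∈ I ∧ φ r = ψ r := by
  induction f using MvPolynomial.induction_on with
  | C a => exact ⟨0, C a, by simp, hC a⟩
  | add p q hp hq =>
    obtain ⟨d₁, r₁, h₁, e₁⟩ := hp
    obtain ⟨d₂, r₂, h₂, e₂⟩ := hq
    refine ⟨d₁ + d₂, y ^ d₂ * r₁ + y ^ d₁ * r₂, ?_, by simp [e₁, e₂, hy]⟩
    convert I.add_mem (I.mul_mem_left (y ^ d₂) h₁) (I.mul_mem_left (y ^ d₁) h₂) using 1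
    ring
  | mul_X p s hp =>
    obtain ⟨d₁, r₁, h₁, e₁⟩ := hp
    obtain ⟨d₂, r₂, h₂, e₂⟩ := hX s
    refine ⟨d₁ + d₂, r₁ * r₂, ?_, by simp [e₁, e₂]⟩
    convert I.add_mem (I.mul_mem_left (y ^ d₂ * X s) h₁) (I.mul_mem_left r₁ h₂) using 1
    ring

end MvPolynomial

namespace SkewSymmetric

variable {K : Type*} [Field K] {n : ℕ}

abbrev Var (n : ℕ) := {p : Fin n × Fin n // p.1 < p.2} ⊕ Fin n

local notation "𝓡" => MvPolynomial (Var n) K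

noncomputable def skewEntry (i j : Fin n) : 𝓡 :=
  if h : i < j then X (Sum.inl ⟨(i, j), h⟩) else if h' : j < i then -X (Sum.inl ⟨(j, i), h'⟩) else 0

/-- Rows are indexed by `ℕ` (rows `i ≥ n` being zero) so that the generators form a sequence. -/
noncomputable def natSkewEntry (i : ℕ) (j : Fin n) : 𝓡 :=
  if h : i < n then skewEntry ⟨i, h⟩ j else 0

/-- Entry `i` of `X Y` with `Y` truncated to its first `l` entries. -/
noncomputable def truncRow (l i : ℕ) : 𝓡 :=
  ∑ k : Fin n with k.val < l, natSkewEntry i k * X (Sum.inr k)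

theorem natSkewEntry_of_lt {i : ℕ} {j : Fin n} (h : i < j) :
    (natSkewEntry i j : 𝓡) =
      X (Sum.inl ⟨(⟨i, h.trans j.isLt⟩, j), h⟩) := by
  rw [natSkewEntry, dif_pos (h.trans j.isLt), skewEntry, dif_pos (Fin.mk_lt_of_lt_val h)]

theorem truncRow_succ (l : Fin n) (i : ℕ) :
    (truncRow (l + 1) i : 𝓡) =
      truncRow l i + X (Sum.inr l) * natSkewEntry i l := by
  have : (univ.filter fun k : Fin n => k.val < l + 1) =
      insert l (univ.filter fun k : Fin n => k.val < l) := by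
    ext k
    simp only [mem_filter, mem_univ, true_and, mem_insert, Fin.ext_iff]
    omega
  rw [truncRow, this, sum_insert (by simp), truncRow, add_comm, mul_comm]

theorem map_truncRow_eq {A : Type*} [CommRing A] {Φ ψ : 𝓡 →+* A} {l i : ℕ}
    (hx : ∀ q : {p : Fin n × Fin n // p.1 < p.2}, (q.1.2 : ℕ) < l →
      Φ (X (Sum.inl q)) = ψ (X (Sum.inl q)))
    (hy : ∀ k : Fin n, (k : ℕ) < l → Φ (X (Sum.inr k)) = ψ (X (Sum.inr k))) (hi : i < l) :
    Φ (truncRow l i) = ψ (truncRow l i) := by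
  simp only [truncRow, map_sum, map_mul]
  refine sum_congr rfl fun k hk => ?_
  have hk : (k : ℕ) < l := by simpa using hk
  rw [hy k hk]
  congr 1
  unfold natSkewEntry skewEntry
  split_ifs with h₁ h₂ h₃
  · exact hx _ hk
  · rw [map_neg, map_neg, hx _ (by simpa using hi)]
  all_goals simp

theorem truncRow_not_mem_initialSpan {l j : ℕ} (hl : l ≤ n) (h2 : 2 ≤ l) (hj : j < l) :
    (truncRow l j : 𝓡) ∉ initialSpan (truncRow l) j := by
  obtain ⟨k, hkl, hkj⟩ : ∃ k < l, k ≠ j := ⟨if j = 0 then 1 else 0, by split <;> omega,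
    by split <;> omega⟩
  let kf : Fin n := ⟨k, by omega⟩
  -- the point with `y = e_k` and `x_{pq} = 1` exactly when `j ∈ {p, q}` sends `g_i` to `±δ_ij`
  let ev : Var n → K := Sum.elim (fun q => if (q.1.1 : ℕ) = j ∨ (q.1.2 : ℕ) = j then 1 else 0)
    (fun m => if m = kf then 1 else 0)
  have heval : ∀ i, eval ev (truncRow l i) = eval ev (natSkewEntry i kf) := fun i => by
    rw [truncRow, map_sum, sum_eq_single_of_mem kf (by simpa using hkl)
      fun m _ hm => by simp [ev, hm]]
    simp [ev]
  have hzero : ∀ i, i ≠ j → eval ev (truncRow l i) = 0 := fun i hij => by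
    rw [heval]
    unfold natSkewEntry skewEntry
    split_ifs <;> simp [ev, hij, kf, hkj]
  have hj : eval ev (truncRow l j) ≠ 0 := by
    rw [heval]
    unfold natSkewEntry skewEntry
    split_ifs with h₁ h₂ h₃ <;> simp_all [ev, kf, Fin.lt_def, Fin.ext_iff]
    all_goals omega
  intro hmem
  have hle : initialSpan (truncRow l) j ≤ RingHom.ker (eval ev) :=
    Ideal.span_le.mpr <| by
      rintro _ ⟨i, hi, rfl⟩
      exact hzero i (Set.mem_Iio.mp hi).ne
  exact hj (hle hmem)

/-- The map `R → R[1/y_l]` solving the equations `g_i = 0`, `i < t`, of the first `l + 1` columns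
for the variables `x_{il}`. -/
noncomputable def solveMap (l : Fin n) (t : ℕ) :
    𝓡 →+* Localization.Away (X (Sum.inr l) : 𝓡) :=
  eval₂Hom ((algebraMap 𝓡 _).comp C) <| Sum.elim
    (fun q => if q.1.2 = l ∧ (q.1.1 : ℕ) < t then
      -algebraMap _ _ (truncRow l q.1.1 : 𝓡) * IsLocalization.Away.invSelf (X (Sum.inr l) : 𝓡)
      else algebraMap _ _ (X (Sum.inl q) : 𝓡))
    (fun k => algebraMap _ _ (X (Sum.inr k) : 𝓡))

variable {l : Fin n} {t : ℕ}

theorem solveMap_X_inl_of_not {q : {p : Fin n × Fin n // p.1 < p.2}}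
    (hq : ¬(q.1.2 = l ∧ (q.1.1 : ℕ) < t)) :
    solveMap l t (X (Sum.inl q) : 𝓡) = algebraMap 𝓡 _ (X (Sum.inl q)) := by
  simp [solveMap, hq]

theorem solveMap_X_inl_of {q : {p : Fin n × Fin n // p.1 < p.2}}
    (hq : q.1.2 = l ∧ (q.1.1 : ℕ) < t) :
    solveMap l t (X (Sum.inl q) : 𝓡) =
      -algebraMap 𝓡 _ (truncRow l q.1.1) * IsLocalization.Away.invSelf (X (Sum.inr l) : 𝓡) := by
  simp [solveMap, hq]

theorem solveMap_X_inr (k : Fin n) :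
    solveMap l t (X (Sum.inr k) : 𝓡) = algebraMap 𝓡 _ (X (Sum.inr k)) := by
  simp [solveMap]

theorem solveMap_truncRow {i : ℕ} (hi : i < l) :
    solveMap l t (truncRow l i : 𝓡) = algebraMap 𝓡 _ (truncRow l i) :=
  map_truncRow_eq (fun q hq => solveMap_X_inl_of_not fun h => hq.ne (by rw [h.1]))
    (fun k _ => solveMap_X_inr k) hi

theorem initialSpan_le_ker_solveMap (ht : t ≤ l) :
    initialSpan (truncRow (l + 1)) t ≤ RingHom.ker (solveMap (K := K) l t) := by
  refine Ideal.span_le.mpr ?_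
  rintro _ ⟨i, hi, rfl⟩
  have hil : i < l := (Set.mem_Iio.mp hi).trans_le ht
  rw [SetLike.mem_coe, RingHom.mem_ker, truncRow_succ, natSkewEntry_of_lt hil, map_add, map_mul,
    solveMap_truncRow hil, solveMap_X_inr]
  rw [solveMap_X_inl_of (l := l) ⟨rfl, Set.mem_Iio.mp hi⟩]
  linear_combination (-algebraMap 𝓡 _ (truncRow l i)) *
    IsLocalization.Away.mul_invSelf (S := Localization.Away (X (Sum.inr l) : 𝓡))
      (X (Sum.inr l) : 𝓡)

theorem exists_pow_mul_sub_mem_and_solveMap_eq (ht : t ≤ l) (f : 𝓡) :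
    ∃ (d : ℕ) (r : 𝓡),
      X (Sum.inr l) ^ d * f - r ∈ initialSpan (truncRow (l + 1)) t
      ∧ solveMap l t r = algebraMap 𝓡 _ r := by
  refine exists_pow_mul_sub_mem _ _ (fun a => by simp [solveMap]) (solveMap_X_inr l) (fun s => ?_) f
  rcases s with q | k
  · by_cases hq : q.1.2 = l ∧ (q.1.1 : ℕ) < t
    · -- `x_{il} y_l ≡ -g_i` modulo the ideal
      have hql : (q.1.1 : ℕ) < l := by rw [← hq.1]; exact q.2
      refine ⟨1, -truncRow l q.1.1, ?_, by rw [map_neg, map_neg, solveMap_truncRow hql]⟩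
      · have hq' : natSkewEntry (q.1.1 : ℕ) l = (X (Sum.inl q) : 𝓡) := by
          obtain ⟨⟨a, b⟩, hab⟩ := q
          obtain ⟨rfl, -⟩ := hq
          exact natSkewEntry_of_lt hab
        rw [pow_one, sub_neg_eq_add, ← hq', add_comm (X (Sum.inr l) * _), ← truncRow_succ]
        exact apply_mem_initialSpan hq.2
    · exact ⟨0, X (Sum.inl q), by simp, solveMap_X_inl_of_not hq⟩
  · exact ⟨0, X (Sum.inr k), by simp, solveMap_X_inr k⟩

theorem mem_of_X_mul_mem_initialSpan_truncRow_succ (ht : t ≤ l)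
    (hK : HasKoszulSyzygies (truncRow l : ℕ → 𝓡) t) {r : 𝓡}
    (hr : X (Sum.inr l) * r ∈ initialSpan (truncRow (l + 1)) t) :
    r ∈ initialSpan (truncRow (l + 1)) t := by
  have hspan : initialSpan (truncRow (l + 1) : ℕ → 𝓡) t =
      initialSpan (fun i => truncRow l i + X (Sum.inr l) * natSkewEntry i l) t := by
    congr 1
    funext i
    exact truncRow_succ l i
  rw [hspan] at hr ⊢
  let π : 𝓡 →+* 𝓡 := (aeval (Function.update X (Sum.inr l) 0)).toRingHom
  refine mem_initialSpan_of_mul_mem (IsRegular.of_ne_zero (X_ne_zero _)).left π (by simp [π])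
    (fun r => ?_) (fun i hi => ?_) hK hr
  · have hvar : ∀ s, (X s : 𝓡) - Function.update X (Sum.inr l) 0 s ∈ Ideal.span {X (Sum.inr l)} :=
      fun s => by by_cases hs : s = Sum.inr l <;> simp [hs]
    have := aeval_sub_aeval_mem hvar r
    rwa [aeval_X_left_apply] at this
  · exact map_truncRow_eq (ψ := RingHom.id _) (fun q _ => by simp [π])
      (fun k hk => by simp [π, Fin.ext_iff, hk.ne])
      (hi.trans_le ht)

theorem isPrime_initialSpan_truncRow_succ (ht : t ≤ l)
    (hK : HasKoszulSyzygies (truncRow l : ℕ → 𝓡) t) :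
    (initialSpan (truncRow (l + 1) : ℕ → 𝓡) t).IsPrime := by
  have hy : Submonoid.powers (X (Sum.inr l) : 𝓡) ≤ nonZeroDivisors 𝓡 :=
    powers_le_nonZeroDivisors_of_noZeroDivisors (X_ne_zero _)
  have := IsLocalization.isDomain_localization (M := Submonoid.powers (X (Sum.inr l) : 𝓡)) hy
  exact Ideal.isPrime_of_le_ker _ (solveMap l t) (algebraMap _ _) (IsLocalization.injective _ hy)
    (initialSpan_le_ker_solveMap ht) (fun _ => mem_of_X_mul_mem_initialSpan_truncRow_succ ht hK)
    (exists_pow_mul_sub_mem_and_solveMap_eq ht)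

theorem isPrime_initialSpan_truncRow :
    ∀ l ≤ n, ∀ t ≤ l - 2, (initialSpan (truncRow l : ℕ → 𝓡) t).IsPrime
  | 0, _, t, ht => by
    rw [show t = 0 by omega, initialSpan_zero]
    exact Ideal.isPrime_bot
  | l + 1, hl, t, ht => by
    have hK : HasKoszulSyzygies (truncRow l : ℕ → 𝓡) t :=
      hasKoszulSyzygies_of_regular fun j hj a ha =>
        ((isPrime_initialSpan_truncRow l (by omega) j (by omega)).mem_or_mem ha).resolve_right
          (truncRow_not_mem_initialSpan (by omega) (by omega) (by omega))
    exact isPrime_initialSpan_truncRow_succ (l := ⟨l, by omega⟩) (by simp only; omega) hK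

end SkewSymmetric

/-- For the generic skew-symmetric `n × n` matrix `X` and generic column
`Y`, for every `1 ≤ t ≤ n - 2`, the ideal `⟨g_1, …, g_t⟩` is prime in
`K[x_{ij} (i < j), y_j]`. -/
theorem span_g_isPrime_skewSymmetric
    (K : Type*) [Field K] (n : ℕ)
    (Xmat : Matrix (Fin n) (Fin n)
      (MvPolynomial ({p : Fin n × Fin n // p.1 < p.2} ⊕ Fin n) K))
    (hX : ∀ i j, Xmat i j =
      if h : i < j then MvPolynomial.X (Sum.inl ⟨(i, j), h⟩)
      else if h' : j < i then - MvPolynomial.X (Sum.inl ⟨(j, i), h'⟩)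
      else 0)
    (g : Fin n → MvPolynomial ({p : Fin n × Fin n // p.1 < p.2} ⊕ Fin n) K)
    (hg : ∀ i, g i = ∑ k, Xmat i k * MvPolynomial.X (Sum.inr k)) :
    ∀ t : ℕ, 1 ≤ t → t ≤ n - 2 →
      (Ideal.span {p | ∃ i : Fin n, (i : ℕ) < t ∧ p = g i}).IsPrime := by
  intro t _ ht
  have hg' : ∀ i : Fin n, g i = SkewSymmetric.truncRow n i := fun i => by
    rw [hg, SkewSymmetric.truncRow, filter_true_of_mem fun k _ => k.isLt]
    refine sum_congr rfl fun k _ => ?_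
    rw [SkewSymmetric.natSkewEntry, dif_pos i.isLt, hX]
    rfl
  have hgens :
      {p | ∃ i : Fin n, (i : ℕ) < t ∧ p = g i} = SkewSymmetric.truncRow n '' Set.Iio t := by
    ext p
    constructor
    · rintro ⟨i, hi, rfl⟩
      exact ⟨i, hi, (hg' i).symm⟩
    · rintro ⟨i, hi, rfl⟩
      have hin : i < n := by simp only [Set.mem_Iio] at hi; omega
      exact ⟨⟨i, hin⟩, hi, (hg' ⟨i, hin⟩).symm⟩
  rw [hgens]
  exact SkewSymmetric.isPrime_initialSpan_truncRow n le_rfl t ht
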